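/- arXiv:math/0412320 — 2 statements merged into one kernel-verified Lean document; each statement's English description precedes it below -/
import Mathlib

section
/- Let F be a positive definite quadratic form in d variables, let λ > 0, and consider the linear function f(Q) = trace(F·Q) on positive definite quadratic forms. Then f attains a minimum on the surface {Q PQF : λ(Q) = λ} at the point Q_F if and only if F lies in the cone generated by the rank-one matrices v vᵀ with v ∈ Min(Q_F), i.e., F = Σ_{v ∈ Min(Q_F)} c_v · v vᵀ for some coefficients c_v ≥ 0. -/
open Matrix

noncomputable section

/-- `Q[x] = xᵀ Q x`. -/
def quadForm {d : ℕ} (Q : Matrix (Fin d) (Fin d) ℝ) (x : Fin d → ℝ) : ℝ :=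
  x ⬝ᵥ (Q *ᵥ x)

/-- Coercion of an integer vector to a real vector. -/
def intCast {d : ℕ} (v : Fin d → ℤ) : Fin d → ℝ := fun i => (v i : ℝ)

/-- A positive definite quadratic form: a symmetric positive definite real matrix. -/
def IsPQF {d : ℕ} (Q : Matrix (Fin d) (Fin d) ℝ) : Prop :=
  Q.IsSymm ∧ Q.PosDef

/-- The homogeneous minimum `λ(Q) = min {Q[v] : v ∈ ℤ^d \ {0}}`. -/
def homMin {d : ℕ} (Q : Matrix (Fin d) (Fin d) ℝ) : ℝ :=
  sInf {r | ∃ v : Fin d → ℤ, v ≠ 0 ∧ r = quadForm Q (intCast v)}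

/-- The set of minimal vectors `Min(Q)`. -/
def minVecs {d : ℕ} (Q : Matrix (Fin d) (Fin d) ℝ) : Set (Fin d → ℤ) :=
  {v | v ≠ 0 ∧ quadForm Q (intCast v) = homMin Q}

/-- The inhomogeneous minimum `μ(Q) = max_{x ∈ ℝ^d} min_{v ∈ ℤ^d} Q[x - v]`. -/
def inhomMin {d : ℕ} (Q : Matrix (Fin d) (Fin d) ℝ) : ℝ :=
  ⨆ x : Fin d → ℝ, ⨅ v : Fin d → ℤ, quadForm Q (x - intCast v)

/-- `κ_d`, the volume of the `d`-dimensional Euclidean unit ball. -/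
def ballVol (d : ℕ) : ℝ :=
  (MeasureTheory.volume (Metric.ball (0 : EuclideanSpace ℝ (Fin d)) 1)).toReal

/-- The packing density `δ(Q)`. -/
def packDensity {d : ℕ} (Q : Matrix (Fin d) (Fin d) ℝ) : ℝ :=
  Real.sqrt (homMin Q ^ d / Q.det) * ballVol d / 2 ^ d

/-- The covering density `Θ(Q)`. -/
def covDensity {d : ℕ} (Q : Matrix (Fin d) (Fin d) ℝ) : ℝ :=
  Real.sqrt (inhomMin Q ^ d / Q.det) * ballVol d

/-- The packing-covering constant `γ(Q)`. -/
def pcConst {d : ℕ} (Q : Matrix (Fin d) (Fin d) ℝ) : ℝ :=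
  2 * Real.sqrt (inhomMin Q / homMin Q)

/-- `Q` is perfect: it is the unique symmetric matrix `Q'` with `Q'[v] = λ(Q)`
for all `v ∈ Min(Q)`. -/
def IsPerfectForm {d : ℕ} (Q : Matrix (Fin d) (Fin d) ℝ) : Prop :=
  ∀ Q' : Matrix (Fin d) (Fin d) ℝ, Q'.IsSymm →
    (∀ v ∈ minVecs Q, quadForm Q' (intCast v) = homMin Q) → Q' = Q

/-- `Q` is eutactic: `Q⁻¹ = Σ_{v ∈ Min(Q)} c_v · v vᵀ` with all `c_v > 0`. -/
def IsEutacticForm {d : ℕ} (Q : Matrix (Fin d) (Fin d) ℝ) : Prop :=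
  ∃ (s : Finset (Fin d → ℤ)) (c : (Fin d → ℤ) → ℝ),
    (s : Set (Fin d → ℤ)) = minVecs Q ∧ (∀ v ∈ s, 0 < c v) ∧
    Q⁻¹ = ∑ v ∈ s, c v • vecMulVec (intCast v) (intCast v)

/-- `Q` is extreme: a local maximum of the packing density among PQFs. -/
def IsExtremeForm {d : ℕ} (Q : Matrix (Fin d) (Fin d) ℝ) : Prop :=
  ∃ ε > (0 : ℝ), ∀ Q' : Matrix (Fin d) (Fin d) ℝ, IsPQF Q' →
    (∀ i j, |Q' i j - Q i j| < ε) → packDensity Q' ≤ packDensity Q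

/-!
If `F = ∑ c_v v vᵀ` with `v ∈ Min(Q_F)`, then on the surface `trace (F Q) = ∑ c_v Q[v] ≥ ∑ c_v λ
= trace (F Q_F)`. Conversely, the cone spanned by the `v vᵀ` is finitely generated, hence closed,
so if `F` lies outside it Farkas' lemma yields a symmetric `R` with `R[v] ≥ 0` on `Min(Q_F)` and
`trace (F R) < 0`. For small `t > 0` the form `Q_F + t R` is still positive definite with
homogeneous minimum at least `λ`, because the non-minimal lattice values stay a definite distance
above `λ`; scaling it back onto the surface gives a form with smaller `trace (F ·)`.
-/

section FiniteCone

variable {E : Type*} [AddCommGroup E] [Module ℝ E] {ι : Type*} [Fintype ι]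

def finiteConeHull (g : ι → E) : PointedCone ℝ E :=
  (PointedCone.positive ℝ (ι → ℝ)).map (Fintype.linearCombination ℝ g)

lemma mem_finiteConeHull {g : ι → E} {x : E} :
    x ∈ finiteConeHull g ↔ ∃ c : ι → ℝ, 0 ≤ c ∧ ∑ i, c i • g i = x := by
  simp [finiteConeHull, PointedCone.mem_map, PointedCone.mem_positive,
    Fintype.linearCombination_apply]

variable [TopologicalSpace E] [IsTopologicalAddGroup E] [ContinuousSMul ℝ E] [T2Space E]

/-- Near any point `z`, the cone is the image of the compact set of coefficients `c ≥ 0` with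
`φ (∑ c i • g i) ≤ φ z + 1`, because `φ` is positive on every generator. -/
lemma isClosed_finiteConeHull {g : ι → E} (φ : E →L[ℝ] ℝ)
    (hφ : ∀ i, 0 < φ (g i)) : IsClosed (finiteConeHull g : Set E) := by
  set L : (ι → ℝ) → E := fun c => ∑ i, c i • g i with hL
  have hLc : Continuous L := by fun_prop
  refine closure_subset_iff_isClosed.mp fun z hz => ?_
  set M := φ z + 1
  set K : Set (ι → ℝ) := {c | 0 ≤ c ∧ φ (L c) ≤ M}
  have hφL : ∀ c, φ (L c) = ∑ i, c i * φ (g i) := fun c => by simp [hL, map_sum]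
  have hK : IsCompact K := by
    refine (isCompact_univ_pi fun i => isCompact_Icc (a := 0) (b := M / φ (g i))
      ).of_isClosed_subset ((isClosed_le continuous_const continuous_id).inter
        (isClosed_le (φ.continuous.comp hLc) continuous_const)) ?_
    rintro c ⟨hc0, hcM⟩ i -
    refine ⟨hc0 i, (le_div_iff₀ (hφ i)).mpr ?_⟩
    rw [hφL] at hcM
    exact (Finset.single_le_sum (fun j _ => mul_nonneg (hc0 j) (hφ j).le)
      (Finset.mem_univ i)).trans hcM
  have hsub : {y | φ y < M} ∩ (finiteConeHull g : Set E) ⊆ L '' K := by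
    rintro y ⟨hyM, hy⟩
    obtain ⟨c, hc, rfl⟩ := mem_finiteConeHull.mp hy
    exact ⟨c, ⟨hc, hyM.le⟩, rfl⟩
  have hzK : z ∈ closure (L '' K) :=
    closure_mono hsub ((isOpen_lt φ.continuous continuous_const).inter_closure
      ⟨show φ z < M by simp [M], hz⟩)
  obtain ⟨c, hc, rfl⟩ := (hK.image hLc).isClosed.closure_subset hzK
  exact mem_finiteConeHull.mpr ⟨c, hc.1, rfl⟩

lemma exists_separating_of_notMem_finiteConeHull [LocallyConvexSpace ℝ E]
    {g : ι → E} (φ : E →L[ℝ] ℝ) (hφ : ∀ i, 0 < φ (g i)) {x : E}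
    (hx : x ∉ finiteConeHull g) : ∃ f : StrongDual ℝ E, (∀ i, 0 ≤ f (g i)) ∧ f x < 0 := by
  classical
  obtain ⟨f, hf, hfx⟩ := ProperCone.hyperplane_separation_point
    (⟨finiteConeHull g, isClosed_finiteConeHull φ hφ⟩ : ProperCone ℝ E) hx
  refine ⟨f, fun i => hf _ (mem_finiteConeHull.mpr ⟨Pi.single i 1, ?_, ?_⟩), hfx⟩
  · exact Pi.single_nonneg.mpr zero_le_one
  · simp

end FiniteCone

section QuadForm

variable {d : ℕ}

lemma quadForm_add (A B : Matrix (Fin d) (Fin d) ℝ) (x : Fin d → ℝ) :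
    quadForm (A + B) x = quadForm A x + quadForm B x := by
  simp [quadForm, add_mulVec, dotProduct_add]

lemma quadForm_smul (c : ℝ) (Q : Matrix (Fin d) (Fin d) ℝ) (x : Fin d → ℝ) :
    quadForm (c • Q) x = c * quadForm Q x := by
  simp [quadForm, smul_mulVec, dotProduct_smul]

lemma quadForm_smul_vec (Q : Matrix (Fin d) (Fin d) ℝ) (c : ℝ) (x : Fin d → ℝ) :
    quadForm Q (c • x) = c ^ 2 * quadForm Q x := by
  simp only [quadForm, mulVec_smul, dotProduct_smul, smul_dotProduct, smul_eq_mul]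
  ring

lemma continuous_quadForm (Q : Matrix (Fin d) (Fin d) ℝ) : Continuous (quadForm Q) := by
  unfold quadForm
  fun_prop

lemma Matrix.PosDef.quadForm_pos {Q : Matrix (Fin d) (Fin d) ℝ} (hQ : Q.PosDef) {x : Fin d → ℝ}
    (hx : x ≠ 0) : 0 < quadForm Q x := by
  simpa [quadForm] using hQ.dotProduct_mulVec_pos hx

lemma Matrix.PosSemidef.quadForm_nonneg {Q : Matrix (Fin d) (Fin d) ℝ} (hQ : Q.PosSemidef)
    (x : Fin d → ℝ) : 0 ≤ quadForm Q x := by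
  simpa [quadForm] using hQ.dotProduct_mulVec_nonneg x

lemma isPQF_of_quadForm_pos {Q : Matrix (Fin d) (Fin d) ℝ} (hQ : Q.IsSymm)
    (hpos : ∀ x, x ≠ 0 → 0 < quadForm Q x) : IsPQF Q :=
  ⟨hQ, .of_dotProduct_mulVec_pos (by rwa [IsHermitian, conjTranspose_eq_transpose_of_trivial])
    fun x hx => by simpa [quadForm] using hpos x hx⟩

lemma IsPQF.smul {Q : Matrix (Fin d) (Fin d) ℝ} (hQ : IsPQF Q) {c : ℝ} (hc : 0 < c) :
    IsPQF (c • Q) :=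
  isPQF_of_quadForm_pos (hQ.1.smul c) fun x hx => by
    rw [quadForm_smul]
    exact mul_pos hc (hQ.2.quadForm_pos hx)

lemma trace_vecMulVec_mul (x : Fin d → ℝ) (Q : Matrix (Fin d) (Fin d) ℝ) :
    trace (vecMulVec x x * Q) = quadForm Q x := by
  rw [vecMulVec_mul, trace_vecMulVec, quadForm, dotProduct_mulVec, dotProduct_comm]

lemma trace_sum_smul_vecMulVec_mul {ι : Type*} (s : Finset ι) (c : ι → ℝ) (x : ι → Fin d → ℝ)
    (Q : Matrix (Fin d) (Fin d) ℝ) :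
    trace ((∑ i ∈ s, c i • vecMulVec (x i) (x i)) * Q) = ∑ i ∈ s, c i * quadForm Q (x i) := by
  simp only [Finset.sum_mul, trace_sum, smul_mul_assoc, trace_smul, trace_vecMulVec_mul,
    smul_eq_mul]

lemma trace_mul_nonneg {F Q : Matrix (Fin d) (Fin d) ℝ} (hF : F.PosSemidef)
    (hQ : Q.PosSemidef) : 0 ≤ trace (F * Q) := by
  obtain ⟨m, x, rfl⟩ := posSemidef_iff_eq_sum_vecMulVec.mp hF
  have h := trace_sum_smul_vecMulVec_mul Finset.univ 1 x Q
  simp only [star_trivial, Pi.one_apply, one_smul, one_mul] at h ⊢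
  exact h ▸ Finset.sum_nonneg fun i _ => hQ.quadForm_nonneg (x i)

/-- Compare both sides on the unit sphere. -/
lemma Matrix.PosDef.exists_le_mul_quadForm {Q : Matrix (Fin d) (Fin d) ℝ} (hQ : Q.PosDef)
    {f : (Fin d → ℝ) → ℝ} (hf : Continuous f) (hhom : ∀ (c : ℝ) x, f (c • x) = c ^ 2 * f x) :
    ∃ C > 0, ∀ x, f x ≤ C * quadForm Q x := by
  have hcont : ContinuousOn (fun x => f x / quadForm Q x) (Metric.sphere 0 1) :=
    hf.continuousOn.div (continuous_quadForm Q).continuousOn fun x hx =>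
      (hQ.quadForm_pos (ne_zero_of_mem_unit_sphere ⟨x, hx⟩)).ne'
  obtain ⟨C, hC⟩ := ((isCompact_sphere (0 : Fin d → ℝ) 1).image_of_continuousOn hcont).bddAbove
  refine ⟨max C 1, by positivity, fun x => ?_⟩
  refine le_trans ?_
    (mul_le_mul_of_nonneg_right (le_max_left C 1) (hQ.posSemidef.quadForm_nonneg x))
  obtain rfl | hx := eq_or_ne x 0
  · simp [quadForm, show f 0 = 0 by simpa using hhom 0 0]
  have hnx : 0 < ‖x‖ := norm_pos_iff.mpr hx
  set u := ‖x‖⁻¹ • x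
  have hu : u ∈ Metric.sphere (0 : Fin d → ℝ) 1 := by
    simp [u, norm_smul, hnx.ne']
  have hxu : x = ‖x‖ • u := by simp [u, hnx.ne']
  have hfu : f u ≤ C * quadForm Q u :=
    (div_le_iff₀ (hQ.quadForm_pos (ne_zero_of_mem_unit_sphere ⟨u, hu⟩))).mp (hC ⟨u, hu, rfl⟩)
  rw [hxu, hhom, quadForm_smul_vec]
  nlinarith [sq_nonneg ‖x‖]

end QuadForm

section HomMin

variable {d : ℕ} {Q : Matrix (Fin d) (Fin d) ℝ}

lemma intCast_ne_zero {v : Fin d → ℤ} (hv : v ≠ 0) : intCast v ≠ 0 := fun h =>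
  hv (funext fun i => by simpa [intCast] using congrFun h i)

lemma norm_intCast (v : Fin d → ℤ) : ‖intCast v‖ = ‖v‖ := by
  simp only [intCast, Pi.norm_def]
  congr 2

lemma finite_setOf_quadForm_le (hQ : Q.PosDef) (B : ℝ) :
    {v : Fin d → ℤ | quadForm Q (intCast v) ≤ B}.Finite := by
  obtain ⟨C, hC0, hC⟩ := hQ.exists_le_mul_quadForm (f := fun x => ‖x‖ ^ 2) (by fun_prop)
    fun c x => by rw [norm_smul, mul_pow, Real.norm_eq_abs, sq_abs]
  refine ((isCompact_closedBall (0 : Fin d → ℤ) √(C * B)).finite_of_discrete).subset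
    fun v hv => ?_
  rw [mem_closedBall_zero_iff, ← norm_intCast]
  exact Real.le_sqrt_of_sq_le ((hC _).trans (mul_le_mul_of_nonneg_left hv hC0.le))

lemma homMin_nonneg (hQ : Q.PosDef) : 0 ≤ homMin Q :=
  Real.sInf_nonneg fun _ ⟨_, hv, hr⟩ => hr ▸ (hQ.quadForm_pos (intCast_ne_zero hv)).le

lemma homMin_le (hQ : Q.PosDef) {v : Fin d → ℤ} (hv : v ≠ 0) :
    homMin Q ≤ quadForm Q (intCast v) :=
  csInf_le ⟨0, fun _ ⟨_, hw, hr⟩ => hr ▸ (hQ.quadForm_pos (intCast_ne_zero hw)).le⟩ ⟨v, hv, rfl⟩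

lemma le_homMin (hd : d ≠ 0) {c : ℝ}
    (h : ∀ v : Fin d → ℤ, v ≠ 0 → c ≤ quadForm Q (intCast v)) : c ≤ homMin Q := by
  have : NeZero d := ⟨hd⟩
  refine le_csInf ⟨_, 1, one_ne_zero, rfl⟩ ?_
  rintro _ ⟨v, hv, rfl⟩
  exact h v hv

lemma homMin_smul {c : ℝ} (hc : 0 ≤ c) : homMin (c • Q) = c * homMin Q := by
  rw [homMin, homMin, ← smul_eq_mul, ← Real.sInf_smul_of_nonneg hc]
  congr 1
  ext r
  simp [Set.mem_smul_set, quadForm_smul, eq_comm]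

lemma minVecs_finite (hQ : Q.PosDef) : (minVecs Q).Finite :=
  (finite_setOf_quadForm_le hQ (homMin Q)).subset fun _ hv => hv.2.le

/-- Only finitely many lattice vectors have `Q[v] ≤ λ(Q) + 1`. -/
lemma exists_homMin_lt_le_quadForm (hQ : Q.PosDef) :
    ∃ μ > homMin Q, ∀ v : Fin d → ℤ, v ≠ 0 → v ∉ minVecs Q → μ ≤ quadForm Q (intCast v) := by
  set T := {v : Fin d → ℤ | v ≠ 0 ∧ v ∉ minVecs Q ∧ quadForm Q (intCast v) ≤ homMin Q + 1}
  have hT : T.Finite := (finite_setOf_quadForm_le hQ _).subset fun _ hv => hv.2.2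
  obtain ⟨μ, hμ, hμT⟩ : ∃ μ > homMin Q, ∀ v ∈ T, μ ≤ quadForm Q (intCast v) := by
    rcases T.eq_empty_or_nonempty with hTe | hTne
    · exact ⟨homMin Q + 1, by linarith, by simp [hTe]⟩
    obtain ⟨w, ⟨hw, hwm, -⟩, hwmin⟩ :=
      Set.exists_min_image T (fun v => quadForm Q (intCast v)) hT hTne
    exact ⟨_, (homMin_le hQ hw).lt_of_ne fun h => hwm ⟨hw, h.symm⟩, hwmin⟩
  refine ⟨min μ (homMin Q + 1), lt_min hμ (by linarith), fun v hv hvm => ?_⟩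
  by_cases hvT : quadForm Q (intCast v) ≤ homMin Q + 1
  · exact (min_le_left _ _).trans (hμT v ⟨hv, hvm, hvT⟩)
  · exact (min_le_right _ _).trans (le_of_not_ge hvT)

end HomMin

section Separation

instance {m n : Type*} : LocallyConvexSpace ℝ (Matrix m n ℝ) :=
  inferInstanceAs (LocallyConvexSpace ℝ (m → n → ℝ))

lemma Matrix.exists_isSymm_trace_mul_eq {n : Type*} [Fintype n] [DecidableEq n]
    (f : Matrix n n ℝ →ₗ[ℝ] ℝ) :
    ∃ R : Matrix n n ℝ, R.IsSymm ∧ ∀ A : Matrix n n ℝ, A.IsSymm → trace (A * R) = f A := by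
  set R₀ : Matrix n n ℝ := of fun i j => f (single j i 1)
  have hR₀ : ∀ A, trace (A * R₀) = f A := by
    intro A
    conv_rhs => rw [matrix_eq_sum_single A]
    simp only [trace, diag, mul_apply, R₀, of_apply, map_sum]
    refine Finset.sum_congr rfl fun i _ => Finset.sum_congr rfl fun j _ => ?_
    rw [show single i j (A i j) = A i j • single i j 1 by rw [smul_single, smul_eq_mul, mul_one],
      map_smul, smul_eq_mul]
  refine ⟨(1 / 2 : ℝ) • (R₀ + R₀ᵀ), (isSymm_add_transpose_self R₀).smul _, fun A hA => ?_⟩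
  have hT : trace (A * R₀ᵀ) = trace (A * R₀) := by
    rw [← trace_transpose, transpose_mul, transpose_transpose, hA.eq, trace_mul_comm]
  rw [mul_smul_comm, mul_add, trace_smul, trace_add, hT, hR₀]
  simp only [smul_eq_mul]
  ring

variable {d : ℕ}

lemma exists_isSymm_trace_mul_neg_of_notMem_cone {s : Set (Fin d → ℤ)} (hs : s.Finite)
    (hs0 : ∀ v ∈ s, v ≠ 0) {F : Matrix (Fin d) (Fin d) ℝ} (hF : F.IsSymm)
    (hnot : ¬ ∃ (t : Finset (Fin d → ℤ)) (c : (Fin d → ℤ) → ℝ), (∀ v ∈ t, v ∈ s ∧ 0 ≤ c v) ∧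
      F = ∑ v ∈ t, c v • vecMulVec (intCast v) (intCast v)) :
    ∃ R : Matrix (Fin d) (Fin d) ℝ, R.IsSymm ∧ (∀ v ∈ s, 0 ≤ quadForm R (intCast v)) ∧
      trace (F * R) < 0 := by
  classical
  set g : hs.toFinset → Matrix (Fin d) (Fin d) ℝ := fun v => vecMulVec (intCast v) (intCast v)
  have hFg : F ∉ finiteConeHull g := by
    intro hmem
    obtain ⟨c, hc, hcF⟩ := mem_finiteConeHull.mp hmem
    refine hnot ⟨hs.toFinset, fun v => if h : v ∈ hs.toFinset then c ⟨v, h⟩ else 0,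
      fun v hv => ⟨hs.mem_toFinset.mp hv, by simpa [hv] using hc ⟨v, hv⟩⟩, ?_⟩
    rw [← hcF, ← Finset.sum_coe_sort hs.toFinset]
    simp [g]
  have htr : ∀ v, 0 < trace (g v) := fun v => by
    simpa [g] using dotProduct_self_star_pos_iff.mpr
      (intCast_ne_zero (hs0 v (hs.mem_toFinset.mp v.2)))
  obtain ⟨f, hfg, hfF⟩ := exists_separating_of_notMem_finiteConeHull
    (LinearMap.toContinuousLinearMap (traceLinearMap (Fin d) ℝ ℝ)) htr hFg
  obtain ⟨R, hR, hRf⟩ := exists_isSymm_trace_mul_eq (f : Matrix (Fin d) (Fin d) ℝ →ₗ[ℝ] ℝ)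
  refine ⟨R, hR, fun v hv => ?_, by simpa [hRf F hF] using hfF⟩
  have hsymm : (vecMulVec (intCast v) (intCast v)).IsSymm := transpose_vecMulVec _ _
  simpa [g, ← trace_vecMulVec_mul, hRf _ hsymm] using hfg ⟨v, hs.mem_toFinset.mpr hv⟩

end Separation

section Perturbation

variable {d : ℕ} {Q R : Matrix (Fin d) (Fin d) ℝ}

/-- `Q + t R` stays above `λ(Q)` on `Min(Q)` because `R ≥ 0` there, and on the other lattice
vectors because they lie at a definite distance `μ - λ(Q)` above and `R` is dominated by `Q`. -/
lemma exists_isPQF_add_smul_homMin_le (hd : d ≠ 0) (hQ : IsPQF Q) (hR : R.IsSymm)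
    (hRmin : ∀ v ∈ minVecs Q, 0 ≤ quadForm R (intCast v)) :
    ∃ t : ℝ, 0 < t ∧ IsPQF (Q + t • R) ∧ homMin Q ≤ homMin (Q + t • R) := by
  obtain ⟨C, hC, hRC⟩ := hQ.2.exists_le_mul_quadForm (f := fun x => |quadForm R x|)
    (continuous_quadForm R).abs fun c x => by
      rw [quadForm_smul_vec, abs_mul, abs_of_nonneg (sq_nonneg c)]
  obtain ⟨μ, hμ, hμle⟩ := exists_homMin_lt_le_quadForm hQ.2
  have hlam := homMin_nonneg hQ.2
  have hμ0 : 0 < μ := hlam.trans_lt hμ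
  set t := (μ - homMin Q) / (2 * μ * C)
  have ht : 0 < t := div_pos (by linarith) (by positivity)
  have htC : t * C = (μ - homMin Q) / (2 * μ) := by
    simp only [t]
    field_simp
  have hlow : ∀ x, (1 - t * C) * quadForm Q x ≤ quadForm (Q + t • R) x := fun x => by
    rw [quadForm_add, quadForm_smul]
    nlinarith [neg_abs_le (quadForm R x), hRC x]
  have h1 : 0 < 1 - t * C := by
    rw [htC, sub_pos, div_lt_one (by positivity)]
    linarith
  have h2 : homMin Q ≤ (1 - t * C) * μ := by
    rw [htC]
    field_simp
    linarith
  refine ⟨t, ht, isPQF_of_quadForm_pos (hQ.1.add (hR.smul t)) fun x hx =>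
    (mul_pos h1 (hQ.2.quadForm_pos hx)).trans_le (hlow x), le_homMin hd fun v hv => ?_⟩
  by_cases hvm : v ∈ minVecs Q
  · rw [quadForm_add, quadForm_smul, hvm.2]
    nlinarith [hRmin v hvm]
  · exact h2.trans ((mul_le_mul_of_nonneg_left (hμle v hv hvm) h1.le).trans (hlow _))

/-- Rescaling `Q + t R` back to the surface `λ = λ(Q)` only shrinks `trace (F * ·)`. -/
lemma exists_homMin_eq_trace_mul_lt (hd : d ≠ 0) {F : Matrix (Fin d) (Fin d) ℝ}
    (hF : F.PosSemidef) (hQ : IsPQF Q) (hQmin : 0 < homMin Q) (hR : R.IsSymm)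
    (hRmin : ∀ v ∈ minVecs Q, 0 ≤ quadForm R (intCast v)) (hFR : trace (F * R) < 0) :
    ∃ Q' : Matrix (Fin d) (Fin d) ℝ, IsPQF Q' ∧ homMin Q' = homMin Q ∧
      trace (F * Q') < trace (F * Q) := by
  obtain ⟨t, ht, hQt, hle⟩ := exists_isPQF_add_smul_homMin_le hd hQ hR hRmin
  set Qt := Q + t • R
  set a := homMin Q / homMin Qt
  have hQt0 : 0 < homMin Qt := hQmin.trans_le hle
  have ha : 0 < a := div_pos hQmin hQt0
  have ha1 : a ≤ 1 := (div_le_one hQt0).mpr hle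
  refine ⟨a • Qt, hQt.smul ha, by rw [homMin_smul ha.le, div_mul_cancel₀ _ hQt0.ne'], ?_⟩
  calc trace (F * (a • Qt))
        = a * trace (F * Qt) := by rw [mul_smul_comm, trace_smul, smul_eq_mul]
    _ ≤ trace (F * Qt) := mul_le_of_le_one_left (trace_mul_nonneg hF hQt.2.posSemidef) ha1
    _ = trace (F * Q) + t * trace (F * R) := by
      rw [mul_add, trace_add, mul_smul_comm, trace_smul, smul_eq_mul]
    _ < trace (F * Q) := by nlinarith

end Perturbation

/-- The linear function `Q ↦ trace(F·Q)` attains a minimum on the surface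
`{Q PQF : λ(Q) = lam}` at `Q_F` if and only if `F` lies in the cone generated by
the matrices `v vᵀ`, `v ∈ Min(Q_F)`. -/
theorem trace_min_on_homMin_surface_iff {d : ℕ} (F QF : Matrix (Fin d) (Fin d) ℝ)
    (hF : IsPQF F) (lam : ℝ) (hlam : 0 < lam) (hQF : IsPQF QF) (hmin : homMin QF = lam) :
    (∀ Q : Matrix (Fin d) (Fin d) ℝ, IsPQF Q → homMin Q = lam →
        Matrix.trace (F * QF) ≤ Matrix.trace (F * Q)) ↔
      ∃ (s : Finset (Fin d → ℤ)) (c : (Fin d → ℤ) → ℝ),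
        (∀ v ∈ s, v ∈ minVecs QF ∧ 0 ≤ c v) ∧
        F = ∑ v ∈ s, c v • vecMulVec (intCast v) (intCast v) := by
  subst hmin
  constructor
  · intro hQF_min
    obtain rfl | hd := eq_or_ne d 0
    · exact ⟨∅, 0, by simp, Subsingleton.elim _ _⟩
    by_contra hnot
    obtain ⟨R, hR, hRmin, hFR⟩ := exists_isSymm_trace_mul_neg_of_notMem_cone
      (minVecs_finite hQF.2) (fun v hv => hv.1) hF.1 hnot
    obtain ⟨Q, hQ, hQmin, hlt⟩ :=
      exists_homMin_eq_trace_mul_lt hd hF.2.posSemidef hQF hlam hR hRmin hFR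
    exact (hQF_min Q hQ hQmin).not_gt hlt
  · rintro ⟨s, c, hsc, rfl⟩ Q hQ hQmin
    rw [trace_sum_smul_vecMulVec_mul, trace_sum_smul_vecMulVec_mul]
    refine Finset.sum_le_sum fun v hv => mul_le_mul_of_nonneg_left ?_ (hsc v hv).2
    rw [(hsc v hv).1.2, ← hQmin]
    exact homMin_le hQ.2 (hsc v hv).1.1
end
end

section
/- For every d ≥ 2, the packing-covering constant of the quadratic form Q_{A*_d} (with diagonal entries d and off-diagonal entries −1) equals γ(Q_{A*_d}) = √((d+2)/3). -/
open Matrix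

noncomputable section

/-- The form `Q_{A*_d}` with diagonal entries `d` and off-diagonal entries `-1`. -/
def QAstar (d : ℕ) : Matrix (Fin d) (Fin d) ℝ :=
  Matrix.of fun i j => if i = j then (d : ℝ) else -1


section AuxPCQ
open Finset
-- the normalized quadratic form
lemma quadForm_eq {d : ℕ} (y : Fin d → ℝ) :
    quadForm (QAstar d) y = ((d:ℝ)+1) * (∑ i, y i ^ 2) - (∑ i, y i) ^ 2 := by
  unfold quadForm QAstar
  simp only [dotProduct, mulVec, Matrix.of_apply]
  have h : ∀ i : Fin d, (∑ j, (if i = j then (d:ℝ) else -1) * y j)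
      = ((d:ℝ)+1) * y i - ∑ j, y j := by
    intro i
    have h2 : ∀ j : Fin d, (if i = j then (d:ℝ) else -1) * y j
        = ((d:ℝ)+1) * (if i = j then y j else 0) - y j := by
      intro j; by_cases h : i = j <;> simp [h] <;> ring
    rw [Finset.sum_congr rfl fun j _ => h2 j, Finset.sum_sub_distrib, ← Finset.mul_sum,
      Finset.sum_ite_eq univ i y]
    simp
  rw [Finset.sum_congr rfl fun i _ => by rw [h i]]
  simp only [mul_sub, Finset.sum_sub_distrib, ← Finset.sum_mul, Finset.mul_sum]
  ring_nf
  congr 1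
  · exact Finset.sum_congr rfl fun i _ => by ring
  · rw [sq, Finset.sum_mul_sum]


lemma sum_range_cast (n : ℕ) : ∑ i ∈ Finset.range n, (i:ℝ) = n*(n-1)/2 := by
  induction n with
  | zero => simp
  | succ m ih => rw [Finset.sum_range_succ, ih]; push_cast; ring

lemma sum_range_sq_cast (n : ℕ) : ∑ i ∈ Finset.range n, (i:ℝ)^2 = n*(n-1)*(2*n-1)/6 := by
  induction n with
  | zero => simp
  | succ m ih => rw [Finset.sum_range_succ, ih]; push_cast; ring

lemma N_nonneg {n : ℕ} (y : Fin n → ℝ) :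
    0 ≤ (n:ℝ) * (∑ i, y i ^ 2) - (∑ i, y i) ^ 2 := by
  have h := sq_sum_le_card_mul_sum_sq (s := (univ : Finset (Fin n))) (f := y)
  simp only [Finset.card_univ, Fintype.card_fin] at h
  linarith

lemma N_shift {n : ℕ} (y : Fin n → ℝ) (t : ℝ) :
    (n:ℝ) * (∑ i, (y i + t) ^ 2) - (∑ i, (y i + t)) ^ 2
      = (n:ℝ) * (∑ i, y i ^ 2) - (∑ i, y i) ^ 2 := by
  have e0 : ∑ i : Fin n, (y i + t) ^ 2 = ∑ i : Fin n, (y i ^ 2 + (2*t) * y i + t^2) :=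
    Finset.sum_congr rfl fun i _ => by ring
  have h1 : ∑ i : Fin n, (y i + t) ^ 2 = (∑ i, y i ^ 2) + 2*t*(∑ i, y i) + n*t^2 := by
    rw [e0, Finset.sum_add_distrib, Finset.sum_add_distrib, ← Finset.mul_sum]
    simp [Finset.card_univ, mul_comm]
  have h2 : ∑ i : Fin n, (y i + t) = (∑ i, y i) + n*t := by
    rw [Finset.sum_add_distrib]; simp [Finset.card_univ, mul_comm]
  rw [h1, h2]; ring

lemma abel_sum (f g : ℕ → ℝ) (n : ℕ) :
    ∑ k ∈ Finset.range n, (f (k+1) - f k) * g k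
      = f n * g n - f 0 * g 0 - ∑ k ∈ Finset.range n, f (k+1) * (g (k+1) - g k) := by
  induction n with
  | zero => simp
  | succ m ih => rw [Finset.sum_range_succ, Finset.sum_range_succ, ih]; ring

lemma key_ineq (d : ℕ) (b : Fin (d+1) → ℝ) :
    (∑ i : Fin (d+1), (2*(i:ℝ) - d) * b i)
      - (((d:ℝ)+1) * (∑ i, b i ^ 2) - (∑ i, b i)^2)
      ≤ (d:ℝ)*((d:ℝ)+2)/12 := by
  set q : ℝ := (d:ℝ)+1 with hqdef
  have hq : 0 < q := by positivity
  have h0 : ∑ i : Fin (d+1), (2*(i:ℝ) - d) = 0 := by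
    rw [Fin.sum_univ_eq_sum_range (fun i => 2*(i:ℝ) - d), Finset.sum_sub_distrib,
      ← Finset.mul_sum, sum_range_cast]
    simp; push_cast; ring
  have h1 : ∑ i : Fin (d+1), (2*(i:ℝ) - d)^2 = d*q*(d+2)/3 := by
    rw [Fin.sum_univ_eq_sum_range (fun i => (2*(i:ℝ) - d)^2)]
    have e0 : ∑ i ∈ range (d+1), (2*(i:ℝ)-d)^2
        = ∑ i ∈ range (d+1), (4*(i:ℝ)^2 - (4*(d:ℝ))*(i:ℝ) + (d:ℝ)^2) :=
      Finset.sum_congr rfl fun i _ => by ring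
    rw [e0, Finset.sum_add_distrib, Finset.sum_sub_distrib, ← Finset.mul_sum, ← Finset.mul_sum,
      sum_range_cast, sum_range_sq_cast]
    simp [hqdef]; push_cast; ring
  have hN := N_nonneg (fun i : Fin (d+1) => 2*q*b i - (2*(i:ℝ) - d))
  have e1 : ∑ i : Fin (d+1), (2*q*b i - (2*(i:ℝ)-d))^2
      = 4*q^2*(∑ i, b i^2) - 4*q*(∑ i : Fin (d+1), (2*(i:ℝ)-d)*b i)
        + ∑ i : Fin (d+1), (2*(i:ℝ)-d)^2 := by
    have e0 : ∑ i : Fin (d+1), (2*q*b i - (2*(i:ℝ)-d))^2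
        = ∑ i : Fin (d+1), ((4*q^2)*(b i^2) - (4*q)*((2*(i:ℝ)-d)*b i) + (2*(i:ℝ)-d)^2) :=
      Finset.sum_congr rfl fun i _ => by ring
    rw [e0, Finset.sum_add_distrib, Finset.sum_sub_distrib, ← Finset.mul_sum, ← Finset.mul_sum]
  have e2 : ∑ i : Fin (d+1), (2*q*b i - (2*(i:ℝ)-d)) = 2*q*(∑ i, b i) := by
    rw [Finset.sum_sub_distrib, h0, ← Finset.mul_sum]; ring
  rw [e1, e2, h1] at hN
  simp only [Nat.cast_add, Nat.cast_one] at hN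
  rw [← hqdef] at hN
  have h3 : (0:ℝ) < 4*q^2 := by positivity
  have h2 : 0 ≤ 4*q^2*((d:ℝ)*((d:ℝ)+2)/12 - ((∑ i : Fin (d+1), (2*(i:ℝ)-d)*b i)
      - (q * (∑ i, b i^2) - (∑ i, b i)^2))) := by nlinarith [hN]
  nlinarith [(mul_nonneg_iff_of_pos_left h3).mp h2]


lemma strictmono_fin_gap {n : ℕ} (g : Fin n → ℤ) (hg : StrictMono g) :
    ∀ i j : Fin n, i ≤ j → (j:ℤ) - (i:ℤ) ≤ g j - g i := by
  suffices h : ∀ (m : ℕ) (i j : Fin n), (i:ℕ) + m = (j:ℕ) → (m:ℤ) ≤ g j - g i by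
    intro i j hij
    have := h ((j:ℕ) - (i:ℕ)) i j (by omega)
    have hc : ((((j:ℕ) - (i:ℕ) : ℕ)):ℤ) = (j:ℤ) - (i:ℤ) := by
      have : (i:ℕ) ≤ (j:ℕ) := hij
      omega
    linarith [hc ▸ this]
  intro m
  induction m with
  | zero =>
    intro i j hij
    have : i = j := Fin.ext (by omega)
    simp [this]
  | succ m ih =>
    intro i j hij
    have hjn : (i:ℕ) + m < n := by omega
    set j' : Fin n := ⟨(i:ℕ) + m, hjn⟩ with hj'
    have h1 : (m:ℤ) ≤ g j' - g i := ih i j' rfl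
    have h2 : g j' < g j := hg (by simp [Fin.lt_def, hj']; omega)
    push_cast
    omega

-- double sum identity
lemma double_sum_N {n : ℕ} (y : Fin n → ℝ) :
    ∑ i : Fin n, ∑ j : Fin n, (y i - y j)^2
      = 2 * ((n:ℝ) * (∑ i, y i ^ 2) - (∑ i, y i) ^ 2) := by
  have e : ∀ i : Fin n, ∑ j : Fin n, (y i - y j)^2
      = (n:ℝ) * y i ^2 - (2*y i) * (∑ j, y j) + ∑ j, y j ^2 := by
    intro i
    have e0 : ∑ j : Fin n, (y i - y j)^2
        = ∑ j : Fin n, (y i^2 - (2*y i)*(y j) + y j^2) :=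
      Finset.sum_congr rfl fun j _ => by ring
    rw [e0, Finset.sum_add_distrib, Finset.sum_sub_distrib, ← Finset.mul_sum]
    simp [Finset.card_univ, mul_comm]
  rw [Finset.sum_congr rfl fun i _ => e i, Finset.sum_add_distrib, Finset.sum_sub_distrib,
    ← Finset.sum_mul]
  have : ∑ i : Fin n, (n:ℝ) * y i ^ 2 = (n:ℝ) * ∑ i, y i ^2 := by rw [← Finset.mul_sum]
  rw [this]
  have : ∑ i : Fin n, 2 * y i = 2 * ∑ i, y i := by rw [← Finset.mul_sum]
  rw [this]
  simp [Finset.card_univ]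
  ring

lemma dist_lemma (d : ℕ) (M : Fin (d+1) → ℤ) (hM : Function.Injective M) :
    (d:ℝ)*((d:ℝ)+1)^2*((d:ℝ)+2)/12
      ≤ ((d:ℝ)+1) * (∑ i, (M i:ℝ)^2) - (∑ i, (M i:ℝ))^2 := by
  set τ := Tuple.sort M with hτ
  have hmono : Monotone (M ∘ τ) := Tuple.monotone_sort M
  have hsm : StrictMono (M ∘ τ) := hmono.strictMono_of_injective (hM.comp τ.injective)
  -- termwise comparison after sorting
  have hterm : ∀ i j : Fin (d+1), ((i:ℝ) - (j:ℝ))^2 ≤ ((M (τ i):ℝ) - (M (τ j):ℝ))^2 := by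
    intro i j
    have hZ : (((i:ℕ):ℤ) - ((j:ℕ):ℤ))^2 ≤ (M (τ i) - M (τ j))^2 := by
      rcases le_total i j with h | h
      · have hg := strictmono_fin_gap (M ∘ τ) hsm i j h
        simp only [Function.comp_apply] at hg
        have hij : (((i:ℕ)):ℤ) ≤ ((j:ℕ):ℤ) := by exact_mod_cast Fin.le_def.mp h
        nlinarith [mul_nonneg (sub_nonneg.2 hg)
          (show (0:ℤ) ≤ (M (τ j) - M (τ i)) + (((j:ℕ):ℤ) - ((i:ℕ):ℤ)) by linarith)]
      · have hg := strictmono_fin_gap (M ∘ τ) hsm j i h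
        simp only [Function.comp_apply] at hg
        have hij : (((j:ℕ)):ℤ) ≤ ((i:ℕ):ℤ) := by exact_mod_cast Fin.le_def.mp h
        nlinarith [mul_nonneg (sub_nonneg.2 hg)
          (show (0:ℤ) ≤ (M (τ i) - M (τ j)) + (((i:ℕ):ℤ) - ((j:ℕ):ℤ)) by linarith)]
    exact_mod_cast hZ
  -- sum of (i-j)^2
  have hval : ∑ i : Fin (d+1), ∑ j : Fin (d+1), ((i:ℝ) - (j:ℝ))^2
      = (d:ℝ)*((d:ℝ)+1)^2*((d:ℝ)+2)/6 := by
    rw [double_sum_N (fun i : Fin (d+1) => (i:ℝ))]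
    rw [Fin.sum_univ_eq_sum_range (fun i => (i:ℝ)^2), Fin.sum_univ_eq_sum_range (fun i => (i:ℝ)),
      sum_range_sq_cast, sum_range_cast]
    push_cast; ring
  -- reindex double sum by τ
  have hreindex : ∑ i : Fin (d+1), ∑ j : Fin (d+1), ((M (τ i):ℝ) - (M (τ j):ℝ))^2
      = ∑ i : Fin (d+1), ∑ j : Fin (d+1), ((M i:ℝ) - (M j:ℝ))^2 := by
    rw [Equiv.sum_comp τ (fun i => ∑ j : Fin (d+1), ((M i:ℝ) - (M (τ j):ℝ))^2)]
    · exact Finset.sum_congr rfl fun i _ =>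
        Equiv.sum_comp τ (fun j => ((M i:ℝ) - (M j:ℝ))^2)
  have hsum : ∑ i : Fin (d+1), ∑ j : Fin (d+1), ((i:ℝ) - (j:ℝ))^2
      ≤ ∑ i : Fin (d+1), ∑ j : Fin (d+1), ((M i:ℝ) - (M j:ℝ))^2 := by
    rw [← hreindex]
    exact Finset.sum_le_sum fun i _ => Finset.sum_le_sum fun j _ => hterm i j
  have hd : ∑ i : Fin (d+1), ∑ j : Fin (d+1), ((M i:ℝ) - (M j:ℝ))^2
      = 2 * (((d:ℝ)+1) * (∑ i, (M i:ℝ) ^ 2) - (∑ i, (M i:ℝ)) ^ 2) := by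
    have := double_sum_N (fun i : Fin (d+1) => (M i : ℝ))
    push_cast at this ⊢
    linarith [this]
  rw [hval, hd] at hsum
  linarith

-- depends on s1 (quadForm_eq) and s2

lemma quad_int_ge {d : ℕ} (hd : 2 ≤ d) (v : Fin d → ℤ) (hv : v ≠ 0) :
    (d:ℝ) ≤ ((d:ℝ)+1) * (∑ i, (v i:ℝ) ^ 2) - (∑ i, (v i:ℝ)) ^ 2 := by
  classical
  set s : Finset (Fin d) := Finset.univ.filter (fun i => v i ≠ 0) with hs
  have hsne : s.Nonempty := by
    rcases Function.ne_iff.mp hv with ⟨i, hi⟩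
    exact ⟨i, by simp [hs]; simpa using hi⟩
  set k : ℕ := s.card with hk
  have hk1 : 1 ≤ k := Finset.card_pos.mpr hsne
  have hkd : k ≤ d := by
    calc k ≤ (Finset.univ : Finset (Fin d)).card := Finset.card_le_card (Finset.filter_subset _ _)
    _ = d := by simp
  have hsum_eq : ∑ i, (v i:ℝ) = ∑ i ∈ s, (v i:ℝ) := by
    rw [Finset.sum_filter_of_ne]
    intro i _ h
    simp only [ne_eq]
    intro h0
    exact h (by rw [h0]; simp)
  have hsq_eq : ∑ i, (v i:ℝ)^2 = ∑ i ∈ s, (v i:ℝ)^2 := by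
    rw [Finset.sum_filter_of_ne]
    intro i _ h
    intro h0
    exact h (by rw [h0]; simp)
  have hCS : (∑ i ∈ s, (v i:ℝ))^2 ≤ (k:ℝ) * ∑ i ∈ s, (v i:ℝ)^2 := by
    have := sq_sum_le_card_mul_sum_sq (s := s) (f := fun i => (v i : ℝ))
    exact_mod_cast this
  have hnk : (k:ℝ) ≤ ∑ i ∈ s, (v i:ℝ)^2 := by
    have h1 : ∀ i ∈ s, (1:ℝ) ≤ (v i:ℝ)^2 := by
      intro i hi
      have : v i ≠ 0 := by simp [hs] at hi; exact hi
      have h2 : 1 ≤ |v i| := Int.one_le_abs this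
      have h3 : (1:ℝ) ≤ |(v i:ℝ)| := by exact_mod_cast (by exact_mod_cast h2 : (1:ℤ) ≤ |(v i : ℤ)|)
      calc (1:ℝ) = 1^2 := by norm_num
      _ ≤ |(v i:ℝ)|^2 := by exact pow_le_pow_left₀ (by norm_num) h3 2
      _ = (v i:ℝ)^2 := sq_abs _
    calc (k:ℝ) = ∑ _i ∈ s, (1:ℝ) := by simp [hk]
    _ ≤ ∑ i ∈ s, (v i:ℝ)^2 := Finset.sum_le_sum h1
  rw [hsum_eq, hsq_eq]
  have hk1' : (1:ℝ) ≤ (k:ℝ) := by exact_mod_cast hk1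
  have hkd' : (k:ℝ) ≤ (d:ℝ) := by exact_mod_cast hkd
  nlinarith [hCS, hnk, mul_nonneg (sub_nonneg.2 hk1') (sub_nonneg.2 hkd'),
    mul_nonneg (sub_nonneg.2 hkd') (sub_nonneg.2 hnk)]



lemma prefix_sum (d : ℕ) (c b : ℕ → ℝ)
    (hc : ∀ k < d, c k = b (k+1) - b k) :
    ∀ i ≤ d, ∑ k ∈ range (d+1), (if k < i then c k else 0) = b i - b 0 := by
  intro i hi
  have hsub : range i ⊆ range (d+1) := Finset.range_subset_range.mpr (by omega)
  rw [← Finset.sum_subset hsub (fun k _ hk => by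
    simp only [Finset.mem_range] at hk
    simp [if_neg hk])]
  have h2 : ∀ k ∈ range i, (if k < i then c k else 0) = b (k+1) - b k := by
    intro k hk
    simp only [Finset.mem_range] at hk
    rw [if_pos hk, hc k (by omega)]
  rw [Finset.sum_congr rfl h2, Finset.sum_range_sub]

lemma exists_good_k (d : ℕ) (b : ℕ → ℝ)
    (hmono : ∀ k l, k ≤ l → l ≤ d → b k ≤ b l)
    (hb0 : 0 ≤ b 0) (hb1 : b d < 1) :
    ∃ k < d+1,
      ((d:ℝ)+1) * (∑ i ∈ range (d+1), (b i - if k < i then 1 else 0)^2)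
        - (∑ i ∈ range (d+1), (b i - if k < i then 1 else 0))^2
      ≤ (d:ℝ)*((d:ℝ)+2)/12 := by
  classical
  set q : ℝ := (d:ℝ)+1 with hqdef
  set S1 : ℝ := ∑ i ∈ range (d+1), b i with hS1
  set S2 : ℝ := ∑ i ∈ range (d+1), (b i)^2 with hS2
  set L : ℝ := ∑ i ∈ range (d+1), (2*(i:ℝ)-(d:ℝ)) * b i with hL
  set F : ℕ → ℝ := fun k =>
    q * (∑ i ∈ range (d+1), (b i - if k < i then 1 else 0)^2)
      - (∑ i ∈ range (d+1), (b i - if k < i then 1 else 0))^2 with hF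
  set c : ℕ → ℝ := fun k => if k = d then 1 + b 0 - b d else b (k+1) - b k with hcdef
  set T : ℕ → ℝ := fun k => ∑ i ∈ range (d+1), (if k < i then b i else 0) with hT
  have hclt : ∀ k < d, c k = b (k+1) - b k := by
    intro k hk; simp [hcdef, Nat.ne_of_lt hk]
  have hcnonneg : ∀ k < d+1, 0 ≤ c k := by
    intro k hk
    by_cases h : k = d
    · simp only [hcdef, h, if_pos rfl]; linarith
    · rw [hclt k (by omega)]
      have := hmono k (k+1) (by omega) (by omega)
      linarith
  have hcsum : ∑ k ∈ range (d+1), c k = 1 := by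
    rw [Finset.sum_range_succ, Finset.sum_congr rfl (fun k hk => hclt k (Finset.mem_range.mp hk)),
      Finset.sum_range_sub]
    simp [hcdef]
  have hcount : ∀ k, k ≤ d → ∑ i ∈ range (d+1), (if k < i then (1:ℝ) else 0) = (d:ℝ) - k := by
    intro k hk
    rw [← Finset.sum_filter]
    have he : Finset.filter (fun i => k < i) (range (d+1)) = Finset.Ico (k+1) (d+1) := by
      ext i; simp [Finset.mem_Ico, Finset.mem_range]; omega
    rw [he]
    simp only [Finset.sum_const, Nat.card_Ico, nsmul_eq_mul, mul_one]
    have : d + 1 - (k+1) = d - k := by omega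
    rw [this, Nat.cast_sub hk]
  -- expansion of F
  have hFk : ∀ k, k ≤ d → F k = (q * S2 - S1^2) - 2*q*(T k) + 2*S1*((d:ℝ)-k)
      + ((d:ℝ)-k)*((k:ℝ)+1) := by
    intro k hk
    have e1 : ∑ i ∈ range (d+1), (b i - if k < i then 1 else 0)^2
        = S2 - 2*(T k) + ((d:ℝ)-k) := by
      have h2 : ∀ i ∈ range (d+1), (b i - if k < i then 1 else 0)^2
          = (b i)^2 - 2*(if k < i then b i else 0) + (if k < i then (1:ℝ) else 0) := by
        intro i _
        by_cases h : k < i <;> simp [h] <;> ring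
      rw [Finset.sum_congr rfl h2, Finset.sum_add_distrib, Finset.sum_sub_distrib,
        ← Finset.mul_sum, hcount k hk]
    have e2 : ∑ i ∈ range (d+1), (b i - if k < i then 1 else 0)
        = S1 - ((d:ℝ)-k) := by
      rw [Finset.sum_sub_distrib, hcount k hk]
    rw [hF]
    simp only []
    rw [e1, e2, hqdef]
    ring
  -- identity (ii)
  have hcT : ∑ k ∈ range (d+1), c k * T k = S2 - b 0 * S1 := by
    have e1 : ∀ k ∈ range (d+1), c k * T k
        = ∑ i ∈ range (d+1), (if k < i then c k * b i else 0) := by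
      intro k _
      rw [hT]
      simp only []
      rw [Finset.mul_sum]
      exact Finset.sum_congr rfl fun i _ => by rw [mul_ite, mul_zero]
    rw [Finset.sum_congr rfl e1, Finset.sum_comm]
    have e2 : ∀ i ∈ range (d+1), ∑ k ∈ range (d+1), (if k < i then c k * b i else 0)
        = (b i - b 0) * b i := by
      intro i hi
      have e3 : ∀ k ∈ range (d+1), (if k < i then c k * b i else 0)
          = (if k < i then c k else 0) * b i := by
        intro k _; by_cases h : k < i <;> simp [h]
      rw [Finset.sum_congr rfl e3, ← Finset.sum_mul,
        prefix_sum d c b hclt i (by simp only [Finset.mem_range] at hi; omega)]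
    rw [Finset.sum_congr rfl e2]
    have e4 : ∀ i ∈ range (d+1), (b i - b 0) * b i = (b i)^2 - b 0 * b i := by
      intro i _; ring
    rw [Finset.sum_congr rfl e4, Finset.sum_sub_distrib, ← Finset.mul_sum]
  -- identity (iii)
  have hcD : ∑ k ∈ range (d+1), c k * ((d:ℝ)-(k:ℝ)) = S1 - q * b 0 := by
    rw [Finset.sum_range_succ]
    have elast : c d * ((d:ℝ)-(d:ℝ)) = 0 := by ring
    rw [elast, add_zero]
    have e1 : ∀ k ∈ range d, c k * ((d:ℝ)-(k:ℝ)) = (b (k+1) - b k) * ((d:ℝ)-(k:ℝ)) := by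
      intro k hk
      rw [hclt k (Finset.mem_range.mp hk)]
    rw [Finset.sum_congr rfl e1, abel_sum b (fun k => (d:ℝ)-(k:ℝ)) d]
    have e2 : ∑ k ∈ range d, b (k+1) * (((d:ℝ)-((k:ℕ)+1:ℕ)) - ((d:ℝ)-(k:ℝ))) 
        = - ∑ k ∈ range d, b (k+1) := by
      rw [← Finset.sum_neg_distrib]
      exact Finset.sum_congr rfl fun k _ => by push_cast; ring
    rw [e2]
    have e3 : ∑ k ∈ range d, b (k+1) = S1 - b 0 := by
      rw [hS1, Finset.sum_range_succ']
      ring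
    rw [e3, hqdef]
    push_cast
    ring
  -- identity (iv)
  have hcDK : ∑ k ∈ range (d+1), c k * (((d:ℝ)-(k:ℝ))*((k:ℝ)+1)) = L := by
    rw [Finset.sum_range_succ]
    have elast : c d * (((d:ℝ)-(d:ℝ))*((d:ℝ)+1)) = 0 := by ring
    rw [elast, add_zero]
    have e1 : ∀ k ∈ range d, c k * (((d:ℝ)-(k:ℝ))*((k:ℝ)+1))
        = (b (k+1) - b k) * (((d:ℝ)-(k:ℝ))*((k:ℝ)+1)) := by
      intro k hk
      rw [hclt k (Finset.mem_range.mp hk)]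
    rw [Finset.sum_congr rfl e1, abel_sum b (fun k => ((d:ℝ)-(k:ℝ))*((k:ℝ)+1)) d]
    have e2 : ∑ k ∈ range d, b (k+1) * ((((d:ℝ)-((k:ℕ)+1:ℕ))*(((k:ℕ)+1:ℕ)+1)) - ((d:ℝ)-(k:ℝ))*((k:ℝ)+1))
        = - ∑ k ∈ range d, (2*(((k:ℕ)+1:ℕ):ℝ)-(d:ℝ)) * b (k+1) := by
      rw [← Finset.sum_neg_distrib]
      exact Finset.sum_congr rfl fun k _ => by push_cast; ring
    rw [e2]
    have e3 : ∑ k ∈ range d, (2*(((k:ℕ)+1:ℕ):ℝ)-(d:ℝ)) * b (k+1) = L + (d:ℝ) * b 0 := by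
      rw [hL, Finset.sum_range_succ']
      push_cast
      ring
    rw [e3]
    push_cast
    ring
  -- the weighted sum
  have hwsum : ∑ k ∈ range (d+1), c k * F k = L - (q * S2 - S1^2) := by
    have e1 : ∀ k ∈ range (d+1), c k * F k
        = c k * (q * S2 - S1^2) - 2*q*(c k * T k) + 2*S1*(c k * ((d:ℝ)-(k:ℝ)))
          + c k * (((d:ℝ)-(k:ℝ))*((k:ℝ)+1)) := by
      intro k hk
      rw [hFk k (by simp only [Finset.mem_range] at hk; omega)]
      ring
    rw [Finset.sum_congr rfl e1]
    rw [Finset.sum_add_distrib, Finset.sum_add_distrib, Finset.sum_sub_distrib,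
      ← Finset.sum_mul, ← Finset.mul_sum, ← Finset.mul_sum, hcsum, hcT, hcD, hcDK]
    ring
  -- apply the key inequality
  have hkey : L - (q * S2 - S1^2) ≤ (d:ℝ)*((d:ℝ)+2)/12 := by
    have h := key_ineq d (fun i : Fin (d+1) => b i)
    rw [Fin.sum_univ_eq_sum_range (fun i : ℕ => (2*(i:ℝ)-(d:ℝ)) * b i),
      Fin.sum_univ_eq_sum_range (fun i : ℕ => (b i)^2),
      Fin.sum_univ_eq_sum_range (fun i : ℕ => b i)] at h
    exact h
  -- conclude by contradiction
  by_contra hcon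
  push_neg at hcon
  have hlt : ∀ k ∈ range (d+1), (d:ℝ)*((d:ℝ)+2)/12 < F k := by
    intro k hk
    exact hcon k (Finset.mem_range.mp hk)
  obtain ⟨k₀, hk₀mem, hk₀⟩ := Finset.exists_lt_of_sum_lt
    (show ∑ k ∈ range (d+1), (0:ℝ) < ∑ k ∈ range (d+1), c k by simp [hcsum])
  have hstrict : ∑ k ∈ range (d+1), c k * ((d:ℝ)*((d:ℝ)+2)/12)
      < ∑ k ∈ range (d+1), c k * F k := by
    apply Finset.sum_lt_sum
    · intro k hk
      exact mul_le_mul_of_nonneg_left (le_of_lt (hlt k hk))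
        (hcnonneg k (Finset.mem_range.mp hk))
    · exact ⟨k₀, hk₀mem, by
        have := hlt k₀ hk₀mem
        exact mul_lt_mul_of_pos_left this hk₀⟩
  rw [← Finset.sum_mul, hcsum, one_mul, hwsum] at hstrict
  linarith


lemma cover_exists (d : ℕ) (x : Fin d → ℝ) :
    ∃ v : Fin d → ℤ,
      ((d:ℝ)+1) * (∑ p, (x p - (v p:ℝ))^2) - (∑ p, (x p - (v p:ℝ)))^2
        ≤ (d:ℝ)*((d:ℝ)+2)/12 := by
  classical
  set z : Fin (d+1) → ℝ := Fin.cons 0 x with hz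
  set a : Fin (d+1) → ℝ := fun i => Int.fract (z i) with ha
  set σ : Equiv.Perm (Fin (d+1)) := Tuple.sort a with hσ
  have hasort : Monotone (a ∘ σ) := Tuple.monotone_sort a
  set b : ℕ → ℝ := fun m => if h : m < d+1 then a (σ ⟨m, h⟩) else 0 with hb
  have hmono : ∀ m l, m ≤ l → l ≤ d → b m ≤ b l := by
    intro m l hml hld
    rw [hb]
    simp only []
    rw [dif_pos (by omega : m < d+1), dif_pos (by omega : l < d+1)]
    exact hasort (show (⟨m, by omega⟩ : Fin (d+1)) ≤ ⟨l, by omega⟩ from hml)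
  have hb0 : 0 ≤ b 0 := by
    rw [hb]; simp only []; rw [dif_pos (by omega : 0 < d+1)]; exact Int.fract_nonneg _
  have hb1 : b d < 1 := by
    rw [hb]; simp only []; rw [dif_pos (by omega : d < d+1)]; exact Int.fract_lt_one _
  obtain ⟨k, hk, hFk⟩ := exists_good_k d b hmono hb0 hb1
  set eI : Fin (d+1) → ℤ := fun i => if k < ((σ.symm i : Fin (d+1)) : ℕ) then 1 else 0 with heI
  set v : Fin d → ℤ := fun p => ⌊z p.succ⌋ + eI p.succ - eI 0 with hv
  refine ⟨v, ?_⟩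
  set W : Fin (d+1) → ℝ := fun i => a i - (eI i : ℝ) with hW
  set Y : Fin (d+1) → ℝ := Fin.cons 0 (fun p => x p - (v p : ℝ)) with hY
  have ha0 : a 0 = 0 := by
    rw [ha]
    simp only []
    rw [hz, Fin.cons_zero, Int.fract_zero]
  have hYW : ∀ i, Y i = W i + (- W 0) := by
    intro i
    induction i using Fin.cases with
    | zero =>
      rw [hY, Fin.cons_zero]
      ring
    | succ p =>
      rw [hY, Fin.cons_succ, hW]
      simp only []
      rw [hv]
      simp only []
      have hxz : x p = z p.succ := by rw [hz, Fin.cons_succ]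
      have hfr : a p.succ = z p.succ - (⌊z p.succ⌋:ℝ) := by
        rw [ha]
        simp only []
        rw [← Int.self_sub_floor]
      rw [ha0, hxz]
      push_cast
      rw [hfr]
      ring
  -- convert goal sums to Y sums
  have hs1 : ∑ i : Fin (d+1), Y i = ∑ p : Fin d, (x p - (v p:ℝ)) := by
    rw [hY, Fin.sum_univ_succ]
    simp [Fin.cons_zero, Fin.cons_succ]
  have hs2 : ∑ i : Fin (d+1), (Y i)^2 = ∑ p : Fin d, (x p - (v p:ℝ))^2 := by
    rw [hY, Fin.sum_univ_succ]
    simp [Fin.cons_zero, Fin.cons_succ]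
  rw [← hs1, ← hs2]
  -- shift invariance
  have hshift : ((d:ℝ)+1) * (∑ i : Fin (d+1), (Y i)^2) - (∑ i : Fin (d+1), Y i)^2
      = ((d:ℝ)+1) * (∑ i : Fin (d+1), (W i)^2) - (∑ i : Fin (d+1), W i)^2 := by
    have e1 : ∑ i : Fin (d+1), (Y i)^2 = ∑ i : Fin (d+1), (W i + (- W 0))^2 :=
      Finset.sum_congr rfl fun i _ => by rw [hYW i]
    have e2 : ∑ i : Fin (d+1), Y i = ∑ i : Fin (d+1), (W i + (- W 0)) :=
      Finset.sum_congr rfl fun i _ => by rw [hYW i]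
    rw [e1, e2]
    have := N_shift W (- W 0)
    push_cast at this
    exact this
  rw [hshift]
  -- permutation invariance
  have hperm1 : ∑ i : Fin (d+1), (W i)^2 = ∑ j : Fin (d+1), (W (σ j))^2 :=
    (Equiv.sum_comp σ (fun i => (W i)^2)).symm
  have hperm2 : ∑ i : Fin (d+1), W i = ∑ j : Fin (d+1), W (σ j) :=
    (Equiv.sum_comp σ (fun i => W i)).symm
  rw [hperm1, hperm2]
  -- identify with b
  have hWb : ∀ j : Fin (d+1), W (σ j) = b (j:ℕ) - (if k < (j:ℕ) then 1 else 0) := by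
    intro j
    rw [hW]
    simp only []
    rw [heI]
    simp only [Equiv.symm_apply_apply]
    rw [hb]
    simp only []
    rw [dif_pos j.isLt]
    have : (σ ⟨(j:ℕ), j.isLt⟩) = σ j := by congr 1
    rw [this]
    by_cases h : k < (j:ℕ) <;> simp [h]
  have e3 : ∑ j : Fin (d+1), (W (σ j))^2
      = ∑ i ∈ Finset.range (d+1), (b i - if k < i then 1 else 0)^2 := by
    rw [Finset.sum_congr rfl fun j _ => by rw [hWb j]]
    exact Fin.sum_univ_eq_sum_range (fun i : ℕ => (b i - if k < i then 1 else 0)^2) (d+1)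
  have e4 : ∑ j : Fin (d+1), W (σ j)
      = ∑ i ∈ Finset.range (d+1), (b i - if k < i then 1 else 0) := by
    rw [Finset.sum_congr rfl fun j _ => by rw [hWb j]]
    exact Fin.sum_univ_eq_sum_range (fun i : ℕ => (b i - if k < i then 1 else 0)) (d+1)
  rw [e3, e4]
  exact hFk

lemma quad_nonneg {d : ℕ} (y : Fin d → ℝ) : 0 ≤ quadForm (QAstar d) y := by
  rw [quadForm_eq]
  have h := N_nonneg y
  have h2 : (0:ℝ) ≤ ∑ i, y i ^2 := Finset.sum_nonneg fun i _ => sq_nonneg _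
  linarith

lemma homMin_QAstar (d : ℕ) (hd : 2 ≤ d) : homMin (QAstar d) = d := by
  have hpos : 0 < d := by omega
  set i0 : Fin d := ⟨0, hpos⟩ with hi0
  set e0 : Fin d → ℤ := fun j => if j = i0 then 1 else 0 with he0
  have he0ne : e0 ≠ 0 := by
    intro h
    have := congrFun h i0
    simp [he0] at this
  have hsum1 : ∑ j, intCast e0 j = 1 := by
    unfold intCast
    rw [he0]
    simp
  have hsum2 : ∑ j, (intCast e0 j)^2 = 1 := by
    unfold intCast
    rw [he0]
    have : ∀ j : Fin d, ((if j = i0 then (1:ℤ) else 0 : ℤ):ℝ)^2 = if j = i0 then 1 else 0 := by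
      intro j; by_cases h : j = i0 <;> simp [h]
    rw [Finset.sum_congr rfl fun j _ => this j]
    simp
  have he0v : quadForm (QAstar d) (intCast e0) = d := by
    rw [quadForm_eq, hsum1, hsum2]
    ring
  have hlb : ∀ r ∈ {r | ∃ v : Fin d → ℤ, v ≠ 0 ∧ r = quadForm (QAstar d) (intCast v)},
      (d:ℝ) ≤ r := by
    rintro r ⟨v, hv, rfl⟩
    rw [quadForm_eq]
    exact quad_int_ge hd v hv
  have hmem : (d:ℝ) ∈ {r | ∃ v : Fin d → ℤ, v ≠ 0 ∧ r = quadForm (QAstar d) (intCast v)} :=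
    ⟨e0, he0ne, he0v.symm⟩
  unfold homMin
  exact le_antisymm (csInf_le ⟨(d:ℝ), hlb⟩ hmem) (le_csInf ⟨(d:ℝ), hmem⟩ hlb)

lemma inhomMin_QAstar (d : ℕ) (hd : 2 ≤ d) :
    inhomMin (QAstar d) = (d:ℝ)*((d:ℝ)+2)/12 := by
  set B : ℝ := (d:ℝ)*((d:ℝ)+2)/12 with hB
  have hbdd : ∀ x : Fin d → ℝ,
      BddBelow (Set.range fun v : Fin d → ℤ => quadForm (QAstar d) (x - intCast v)) := by
    intro x
    exact ⟨0, by rintro r ⟨v, rfl⟩; exact quad_nonneg _⟩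
  have hub : ∀ x : Fin d → ℝ,
      (⨅ v : Fin d → ℤ, quadForm (QAstar d) (x - intCast v)) ≤ B := by
    intro x
    obtain ⟨v, hv⟩ := cover_exists d x
    have hq : quadForm (QAstar d) (x - intCast v) ≤ B := by
      rw [quadForm_eq]
      exact hv
    exact ciInf_le_of_le (hbdd x) v hq
  -- the deep hole
  set xs : Fin d → ℝ := fun p => ((p:ℝ)+1)/((d:ℝ)+1) with hxs
  have hlb : ∀ v : Fin d → ℤ, B ≤ quadForm (QAstar d) (xs - intCast v) := by
    intro v
    set V : Fin (d+1) → ℤ := Fin.cons (0:ℤ) v with hV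
    set M : Fin (d+1) → ℤ := fun i => (i:ℤ) - ((d:ℤ)+1) * V i with hM
    have hM0 : M 0 = 0 := by simp [hM, hV]
    have hMinj : Function.Injective M := by
      intro i j hij
      have h1 : ((i:ℕ):ℤ) - ((j:ℕ):ℤ) = ((d:ℤ)+1) * (V i - V j) := by
        simp only [hM] at hij
        ring_nf
        ring_nf at hij
        linarith
      have h2 : (((i:ℕ):ℤ) - ((j:ℕ):ℤ)) = 0 := by
        apply Int.eq_zero_of_abs_lt_dvd ⟨_, h1⟩
        have hi := i.isLt
        have hj := j.isLt
        rw [abs_lt]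
        constructor <;> [push_cast; push_cast] <;> omega
      have : (i:ℕ) = (j:ℕ) := by omega
      exact Fin.ext this
    have hdist := dist_lemma d M hMinj
    have hys : ∀ p : Fin d, (xs - intCast v) p = (M p.succ : ℝ)/((d:ℝ)+1) := by
      intro p
      have : (xs - intCast v) p = ((p:ℝ)+1)/((d:ℝ)+1) - (v p:ℝ) := rfl
      rw [this, hM]
      have hc : V p.succ = v p := by
        rw [hV]
        exact Fin.cons_succ (α := fun _ : Fin (d+1) => ℤ) 0 v p
      simp only [hc]
      have hval : ((p.succ : ℕ):ℝ) = (p:ℝ)+1 := by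
        rw [Fin.val_succ]; push_cast; ring
      push_cast
      rw [hval]
      field_simp
    have hsq : ∑ i : Fin (d+1), (M i:ℝ)^2 = ∑ p : Fin d, (M p.succ:ℝ)^2 := by
      rw [Fin.sum_univ_succ, hM0]
      norm_num
    have hs1 : ∑ i : Fin (d+1), (M i:ℝ) = ∑ p : Fin d, (M p.succ:ℝ) := by
      rw [Fin.sum_univ_succ, hM0]
      norm_num
    have hqpos : (0:ℝ) < ((d:ℝ)+1)^2 := by positivity
    have eA : ∑ i : Fin d, ((xs - intCast v) i) ^ 2
        = ∑ p : Fin d, ((M p.succ:ℝ)/((d:ℝ)+1))^2 :=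
      Finset.sum_congr rfl fun p _ => by rw [hys p]
    have eB : ∑ i : Fin d, (xs - intCast v) i
        = ∑ p : Fin d, ((M p.succ:ℝ)/((d:ℝ)+1)) :=
      Finset.sum_congr rfl fun p _ => by rw [hys p]
    have e2 : ∑ p : Fin d, ((M p.succ:ℝ)/((d:ℝ)+1))^2
        = (∑ p : Fin d, (M p.succ:ℝ)^2)/((d:ℝ)+1)^2 := by
      rw [Finset.sum_div]
      exact Finset.sum_congr rfl fun p _ => by rw [div_pow]
    have e3 : ∑ p : Fin d, ((M p.succ:ℝ)/((d:ℝ)+1))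
        = (∑ p : Fin d, (M p.succ:ℝ))/((d:ℝ)+1) := by
      rw [Finset.sum_div]
    rw [quadForm_eq, eA, eB, e2, e3, ← hsq, ← hs1, div_pow]
    have hfin : B ≤ (((d:ℝ)+1)*(∑ i : Fin (d+1), (M i:ℝ)^2)
        - (∑ i : Fin (d+1), (M i:ℝ))^2)/((d:ℝ)+1)^2 :=
      (le_div_iff₀ hqpos).mpr (by rw [hB]; linarith [hdist])
    have hre : ((d:ℝ)+1)*((∑ i : Fin (d+1), (M i:ℝ)^2)/((d:ℝ)+1)^2)
        - (∑ i : Fin (d+1), (M i:ℝ))^2/((d:ℝ)+1)^2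
        = (((d:ℝ)+1)*(∑ i : Fin (d+1), (M i:ℝ)^2)
          - (∑ i : Fin (d+1), (M i:ℝ))^2)/((d:ℝ)+1)^2 := by
      ring
    rw [hre]
    exact hfin
  unfold inhomMin
  apply le_antisymm
  · exact ciSup_le hub
  · refine le_ciSup_of_le ⟨B, ?_⟩ xs (le_ciInf hlb)
    rintro r ⟨x, rfl⟩
    exact hub x

end AuxPCQ

/-- The packing-covering constant of `Q_{A*_d}` equals `√((d+2)/3)`. -/
theorem pcConst_QAstar (d : ℕ) (hd : 2 ≤ d) :
    pcConst (QAstar d) = Real.sqrt (((d : ℝ) + 2) / 3) := by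
  unfold pcConst
  rw [homMin_QAstar d hd, inhomMin_QAstar d hd]
  have hd0 : (d:ℝ) ≠ 0 := Nat.cast_ne_zero.mpr (by omega)
  have h1 : ((d:ℝ)*((d:ℝ)+2)/12)/(d:ℝ) = ((d:ℝ)+2)/12 := by
    field_simp
  rw [h1, show ((d:ℝ)+2)/3 = 2^2 * (((d:ℝ)+2)/12) by ring,
    Real.sqrt_mul (by norm_num : (0:ℝ) ≤ 2^2), Real.sqrt_sq (by norm_num : (0:ℝ) ≤ 2)]
end
end
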